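/- If an E-combination A_E has only finitely many pairwise elementarily non-equivalent E-classes, then every structure A' elementarily equivalent to A_E is E-representable: every E-class of A' is elementarily equivalent to some A_i. -/

import Mathlib

open FirstOrder Language Cardinal

set_option autoImplicit false

/-- The induced structure on a subset of the universe of a structure in a relational language. -/
def subStructure (L : FirstOrder.Language.{0,0}) [L.IsRelational] (M : Type) [L.Structure M]
    (s : Set M) : L.Structure s where
  funMap := fun f _ => isEmptyElim f
  RelMap := fun r x => Structure.RelMap r (fun k => (x k : M))

/-- The `E`-class of an element `a`, as a set. -/
def classSet (L : FirstOrder.Language.{0,0}) {N : Type} [L.Structure N] (e : L.Relations 2)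
    (a : N) : Set N :=
  {b | Structure.RelMap e ![b, a]}

noncomputable instance (L : FirstOrder.Language.{0,0}) [L.IsRelational] {N : Type}
    [L.Structure N] (e : L.Relations 2) (a : N) : L.Structure (classSet L e a) :=
  subStructure L N (classSet L e a)

/-- The complete theory of the structure induced on the `E`-class of `a`. -/
noncomputable def classTheory (L : FirstOrder.Language.{0,0}) [L.IsRelational] {N : Type}
    [L.Structure N] (e : L.Relations 2) (a : N) : L.Theory :=
  L.completeTheory (classSet L e a)

/-!
Relativizing a sentence `σ` to the `E`-class of a parameter `x` gives a formula `σ^x` expressing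
"the class of `x` satisfies `σ`". If `M` has only finitely many class theories, each of them, `T`,
is isolated among them by a finite conjunction `ψ_T(x)` of relativized separating sentences. Then
`M` satisfies `∀ x, ⋁_T ψ_T(x)` and, for each `σ ∈ T`, `∀ x, ψ_T(x) → σ^x`. These sentences hold
in every model `N` of `Th(M)`, so each class of `N` satisfies some `ψ_T`, hence contains `T`, and
equals it since `T` is complete.
-/

namespace FirstOrder.Language

section CompleteTheory

variable {L : Language}

theorem completeTheory_eq_of_subset {A B : Type*} [L.Structure A] [L.Structure B]
    (h : L.completeTheory A ⊆ L.completeTheory B) :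
    L.completeTheory A = L.completeTheory B := by
  refine h.antisymm fun σ hσB => ?_
  rcases completeTheory.mem_or_not_mem L A σ with hσA | hσA
  · exact hσA
  · exact absurd (mem_completeTheory.1 hσB) (Sentence.realize_not B |>.1 (h hσA))

theorem forall_realize_of_model_completeTheory {M N : Type*} [L.Structure M] [L.Structure N]
    [N ⊨ L.completeTheory M] {α : Type*} [Finite α] (φ : L.Formula α)
    (h : ∀ v : α → M, φ.Realize v) (v : α → N) : φ.Realize v := by
  have hM : M ⊨ (φ.relabel (Sum.inr : α → Empty ⊕ α)).iAlls α := by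
    simpa [Sentence.Realize, Formula.realize_relabel, Function.comp_def] using h
  have hN := (realize_iff_of_model_completeTheory M N _).2 hM
  simp only [Sentence.Realize, Formula.realize_iAlls, Formula.realize_relabel, Function.comp_def,
    Sum.elim_inr] at hN
  exact hN v

end CompleteTheory

variable {L : Language.{0,0}} [L.IsRelational] (e : L.Relations 2)

/-- Relativization to the `e`-class of the parameter, which is the free variable `0`. -/
noncomputable def relativize : ∀ {n : ℕ}, L.BoundedFormula Empty n → L.BoundedFormula (Fin 1) n
  | _, .falsum => .falsum
  | _, .equal t₁ t₂ => .equal (t₁.relabel (Sum.map Empty.elim id))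
      (t₂.relabel (Sum.map Empty.elim id))
  | _, .rel R ts => .rel R fun k => (ts k).relabel (Sum.map Empty.elim id)
  | _, .imp φ ψ => (relativize φ).imp (relativize ψ)
  | n, .all φ => ((Relations.boundedFormula₂ e (Term.var (Sum.inr (Fin.last n)))
      (Term.var (Sum.inl 0))).imp (relativize φ)).all

variable {N : Type} [L.Structure N] (a : N)

theorem realize_relabel_term_classSet {n : ℕ} (t : L.Term (Empty ⊕ Fin n))
    (v : Fin n → classSet L e a) :
    (t.relabel (Sum.map Empty.elim id)).realize (Sum.elim (fun _ : Fin 1 => a) fun k => v k)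
      = (t.realize (Sum.elim Empty.elim v) : classSet L e a) := by
  match t with
  | .var (Sum.inl x) => exact x.elim
  | .var (Sum.inr _) => rfl
  | .func f _ => exact isEmptyElim f

theorem realize_relativize :
    ∀ {n : ℕ} (φ : L.BoundedFormula Empty n) (v : Fin n → classSet L e a),
    (relativize e φ).Realize (fun _ => a) (fun k => v k) ↔ φ.Realize Empty.elim v
  | _, .falsum, _ => Iff.rfl
  | _, .equal _ _, _ => by
      simp only [relativize, BoundedFormula.Realize, realize_relabel_term_classSet]
      exact Subtype.coe_inj
  | _, .rel _ _, _ => by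
      simp only [relativize, BoundedFormula.Realize, realize_relabel_term_classSet]
      rfl
  | _, .imp φ ψ, v => by
      simp only [relativize, BoundedFormula.realize_imp, realize_relativize φ v,
        realize_relativize ψ v]
  | n, .all φ, v => by
      have hsnoc : ∀ y : classSet L e a,
          (fun k => ((Fin.snoc v y : Fin (n + 1) → classSet L e a) k : N))
            = Fin.snoc (fun k => (v k : N)) (y : N) :=
        fun y => Fin.comp_snoc Subtype.val v y
      simp only [relativize, BoundedFormula.realize_all, BoundedFormula.realize_imp,
        BoundedFormula.realize_rel₂, Term.realize_var, Sum.elim_inr, Sum.elim_inl, Fin.snoc_last]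
      refine ⟨fun h y => ?_, fun h x hx => ?_⟩
      · rw [← realize_relativize φ, hsnoc]
        exact h y y.2
      · have := (realize_relativize φ (Fin.snoc v ⟨x, hx⟩)).2 (h ⟨x, hx⟩)
        rwa [hsnoc] at this

theorem realize_relativize_sentence (σ : L.Sentence) :
    Formula.Realize (relativize e σ) (fun _ => a) ↔ σ ∈ classTheory L e a := by
  have h := realize_relativize e a σ default
  rwa [Subsingleton.elim (fun k => ((default : Fin 0 → classSet L e a) k : N)) default,
    Subsingleton.elim (Empty.elim : Empty → classSet L e a) default] at h

theorem classTheory_eq_of_classSet_eq {b : N} (h : classSet L e a = classSet L e b) :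
    classTheory L e a = classTheory L e b :=
  congrArg (fun s : Set N => @completeTheory L s (subStructure L N s)) h

/-- With finitely many class theories, each of them is cut out by a single formula: a conjunction
of relativized sentences separating it from the other ones. -/
theorem exists_formula_iff_classTheory_eq {M : Type} [L.Structure M]
    (hfin : (Set.range (classTheory L e : M → L.Theory)).Finite) (b₀ : M) :
    ∃ ψ : L.Formula (Fin 1), ∀ b : M,
      ψ.Realize (fun _ => b) ↔ classTheory L e b = classTheory L e b₀ := by
  let Other := {T // T ∈ Set.range (classTheory L e : M → L.Theory) ∧ T ≠ classTheory L e b₀}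
  have : Finite Other := (hfin.subset fun _ hT => hT.1).to_subtype
  have hsep : ∀ T : Other, ∃ σ, σ ∈ classTheory L e b₀ ∧ σ ∉ T.1 := by
    rintro ⟨_, ⟨c, rfl⟩, hne⟩
    exact Set.not_subset.1 fun hsub => hne (completeTheory_eq_of_subset hsub).symm
  choose σ hσ using hsep
  refine ⟨Formula.iInf fun T => relativize e (σ T), fun b => ?_⟩
  simp only [Formula.realize_iInf, realize_relativize_sentence]
  refine ⟨fun h => by_contra fun hne => (hσ ⟨_, ⟨b, rfl⟩, hne⟩).2 (h _), fun h T => ?_⟩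
  exact h ▸ (hσ T).1

variable {M : Type} [L.Structure M] [N ⊨ L.completeTheory M]

theorem classTheory_subset_of_realize {ψ : L.Formula (Fin 1)} {b₀ : M}
    (hψ : ∀ b : M, ψ.Realize (fun _ => b) → classTheory L e b = classTheory L e b₀)
    (ha : ψ.Realize (fun _ => a)) : classTheory L e b₀ ⊆ classTheory L e a := by
  intro σ hσ
  have hM : ∀ v : Fin 1 → M, (ψ.imp (relativize e σ)).Realize v := by
    intro v
    rw [show v = fun _ => v 0 from funext fun i => congrArg v (Subsingleton.elim i 0),
      Formula.realize_imp, realize_relativize_sentence]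
    exact fun hb => (hψ _ hb).symm ▸ hσ
  have hN := forall_realize_of_model_completeTheory _ hM fun _ => a
  rw [Formula.realize_imp, realize_relativize_sentence] at hN
  exact hN ha

theorem exists_classTheory_eq_of_finite
    (hfin : (Set.range (classTheory L e : M → L.Theory)).Finite) :
    ∃ b : M, classTheory L e a = classTheory L e b := by
  have := hfin.to_subtype
  choose ψ hψ using exists_formula_iff_classTheory_eq e hfin
  choose rep hrep using fun T : Set.range (classTheory L e : M → L.Theory) => T.2
  have hcover : ∀ v : Fin 1 → M, (Formula.iSup fun T => ψ (rep T)).Realize v := by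
    intro v
    rw [show v = fun _ => v 0 from funext fun i => congrArg v (Subsingleton.elim i 0),
      Formula.realize_iSup]
    exact ⟨⟨_, v 0, rfl⟩, (hψ _ _).2 (hrep ⟨_, v 0, rfl⟩).symm⟩
  obtain ⟨T, hT⟩ := Formula.realize_iSup.1
    (forall_realize_of_model_completeTheory _ hcover fun _ => a)
  exact ⟨rep T, (completeTheory_eq_of_subset
    (classTheory_subset_of_realize e a (fun b => (hψ _ b).1) hT)).symm⟩

end FirstOrder.Language

theorem stmt11_general (L : FirstOrder.Language.{0,0}) [L.IsRelational] (M : Type) [L.Structure M]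
    (e : L.Relations 2) (I : Type) (rep : I → M)
    (hsymm : ∀ a b : M, Structure.RelMap e ![a, b] → Structure.RelMap e ![b, a])
    (htrans : ∀ a b c : M, Structure.RelMap e ![a, b] → Structure.RelMap e ![b, c] →
      Structure.RelMap e ![a, c])
    (hrep : ∀ a : M, ∃ i : I, Structure.RelMap e ![a, rep i])
    (hfin : Set.Finite {T0 : L.Theory | ∃ i : I, T0 = classTheory L e (rep i)}) :
    ∀ (N : FirstOrder.Language.Theory.ModelType.{0,0,0} (L.completeTheory M)) (a : N),
      ∃ i : I, classTheory L e a = classTheory L e (rep i) := by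
  have hclass : ∀ b : M, ∃ i : I, classTheory L e b = classTheory L e (rep i) := by
    intro b
    obtain ⟨i, hi⟩ := hrep b
    refine ⟨i, classTheory_eq_of_classSet_eq e b (Set.ext fun x => ⟨fun hx => ?_, fun hx => ?_⟩)⟩
    · exact htrans x b (rep i) hx hi
    · exact htrans x (rep i) b hx (hsymm b (rep i) hi)
  have hrange : (Set.range (classTheory L e : M → L.Theory)).Finite :=
    hfin.subset fun _ ⟨b, hb⟩ => hb ▸ hclass b
  intro N a
  obtain ⟨b, hb⟩ := exists_classTheory_eq_of_finite e a hrange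
  obtain ⟨i, hi⟩ := hclass b
  exact ⟨i, hb.trans hi⟩

/-- if an `E`-combination `M` (classes given by the elements `rep i`) has only
finitely many pairwise elementarily non-equivalent `E`-classes, then every structure
elementarily equivalent to `M` (i.e. every model of `Th(M)`) is `E`-representable: each of
its `E`-classes is elementarily equivalent to some class of `M`. -/
theorem stmt11 (L : FirstOrder.Language.{0,0}) [L.IsRelational] (M : Type) [L.Structure M]
    (e : L.Relations 2) (I : Type) (rep : I → M)
    (hrefl : ∀ a : M, Structure.RelMap e ![a, a])
    (hsymm : ∀ a b : M, Structure.RelMap e ![a, b] → Structure.RelMap e ![b, a])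
    (htrans : ∀ a b c : M, Structure.RelMap e ![a, b] → Structure.RelMap e ![b, c] →
      Structure.RelMap e ![a, c])
    (hnocross : ∀ (n : ℕ) (r : L.Relations n) (x : Fin n → M), Structure.RelMap r x →
      ∀ k l : Fin n, Structure.RelMap e ![x k, x l])
    (hrep : ∀ a : M, ∃ i : I, Structure.RelMap e ![a, rep i])
    (hfin : Set.Finite {T0 : L.Theory | ∃ i : I, T0 = classTheory L e (rep i)}) :
    ∀ (N : FirstOrder.Language.Theory.ModelType.{0,0,0} (L.completeTheory M)) (a : N),
      ∃ i : I, classTheory L e a = classTheory L e (rep i) :=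
  stmt11_general L M e I rep hsymm htrans hrep hfin
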